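/- Let p, q ≥ 1 with p + q even, let γ_{p,q} ∈ S_{p+q} be the product of the two cycles (1 2 … p)(p+1 p+2 … p+q), and let α be a pair partition of {1,…,p+q} that is connected relative to γ_{p,q}. Then the number of cycles of the product P_α·γ_{p,q} satisfies #(P_α·γ_{p,q}) = (p+q)/2 − 2g for some integer g ≥ 0; in particular #(P_α·γ_{p,q}) ≤ (p+q)/2. -/

import Mathlib

set_option linter.unusedSectionVars false
set_option linter.deprecated false

open Finset Equiv

namespace LRH

variable {n m : ℕ}

/-- The ε-matrix determined by the interaction sets `K`. -/
def eps (K : Fin m → Finset (Fin n)) (i j : Fin m) : ℕ :=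
  if K i ∩ K j = ∅ then 1 else 0

section Partitions

variable {β : Type*} [LinearOrder β]

/-- A partition (equivalence relation) is (ε,ι)-noncrossing. -/
def EpsNC (K : Fin m → Finset (Fin n)) (ι : β → Fin m) (α : Setoid β) : Prop :=
  ∀ i p j q : β, i < p → p < j → j < q →
    α.r i j → α.r p q → ¬ α.r i p → eps K (ι i) (ι p) = 1

/-- Noncrossing partition of a linearly ordered set. -/
def IsNoncrossing (α : Setoid β) : Prop :=
  ∀ i p j q : β, i < p → p < j → j < q →
    α.r i j → α.r p q → ¬ α.r i p → False

/-- Pair partition: every class has exactly two elements. -/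
def IsPairPartition (α : Setoid β) : Prop :=
  ∀ i : β, {j | α.r i j}.ncard = 2

/-- The set `NC^{(ε,ι)}`. -/
def NCSet (K : Fin m → Finset (Fin n)) (ι : β → Fin m) : Set (Setoid β) :=
  {α | α ≤ Setoid.ker ι ∧ EpsNC K ι α}

/-- The set `NC₂^{(ε,ι)}` of (ε,ι)-noncrossing pair partitions. -/
def NC2Set (K : Fin m → Finset (Fin n)) (ι : β → Fin m) : Set (Setoid β) :=
  {α | IsPairPartition α ∧ α ≤ Setoid.ker ι ∧ EpsNC K ι α}

/-- Restriction of a partition to a subset (as a partition of the subtype). -/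
def restrictSetoid (α : Setoid β) (p : β → Prop) : Setoid {x // p x} :=
  Setoid.comap Subtype.val α

end Partitions

section Perms

variable {β : Type*} [LinearOrder β] [Fintype β]

/-- The full cycle on a finite subset `J`, in increasing order, fixing the complement. -/
def fullCycleOn (J : Finset β) : Equiv.Perm β :=
  (J.sort (· ≤ ·)).formPerm

/-- Number of cycles of a permutation, counting fixed points. -/
def numCycles (σ : Equiv.Perm β) : ℕ :=
  σ.cycleType.card + (Fintype.card β - σ.support.card)

/-- `|σ|`, the minimal number of transpositions needed to write σ; equals
`card − numCycles`. -/
def permNorm (σ : Equiv.Perm β) : ℕ :=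
  σ.support.card - σ.cycleType.card

/-- The permutation induced on `J` (extended by the identity off `J`), when `σ`
preserves `J`; junk value `1` otherwise. -/
def permRestrict (σ : Equiv.Perm β) (J : Finset β) : Equiv.Perm β :=
  if h : ∀ x : β, x ∈ J ↔ σ x ∈ J then Equiv.Perm.ofSubtype (σ.subtypePerm fun x => (h x).symm) else 1

/-- `σ` restricted to `J` is noncrossing, i.e. lies on the geodesic `1 - σ_J - γ_J`. -/
def NCOn (σ : Equiv.Perm β) (J : Finset β) : Prop :=
  permNorm (permRestrict σ J) + permNorm ((permRestrict σ J)⁻¹ * fullCycleOn J) = J.card - 1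

/-- `σ_J` and `τ_J` lie on a common geodesic `1 - σ_J - τ_J - γ_J`. -/
def geodesic3 (σ τ : Equiv.Perm β) (J : Finset β) : Prop :=
  permNorm (permRestrict σ J) + permNorm ((permRestrict σ J)⁻¹ * permRestrict τ J)
    + permNorm ((permRestrict τ J)⁻¹ * fullCycleOn J) = J.card - 1

end Perms

variable {k : ℕ}

/-- `J_s = {j : s ∈ K_{ι_j}}`. -/
def Jset (K : Fin m → Finset (Fin n)) (ι : Fin k → Fin m) (s : Fin n) : Finset (Fin k) :=
  Finset.univ.filter (fun j => s ∈ K (ι j))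

/-- The set `S_NC^{(ε,ι)}(γ_k)` of (ε,ι)-noncrossing permutations. -/
def SNCSet (K : Fin m → Finset (Fin n)) (ι : Fin k → Fin m) : Set (Equiv.Perm (Fin k)) :=
  {σ | (∀ j, ι (σ j) = ι j) ∧ ∀ s : Fin n, NCOn σ (Jset K ι s)}

/-- The relation `σ ≤ τ` on `S_NC^{(ε,ι)}(γ_k)`. -/
def geoLe (K : Fin m → Finset (Fin n)) (ι : Fin k → Fin m) (σ τ : Equiv.Perm (Fin k)) : Prop :=
  ∀ s : Fin n, geodesic3 σ τ (Jset K ι s)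

/-- The interaction sets of the XY-model: `K ι = {ι, ι+1}`. -/
def KXY (n : ℕ) : Fin (n - 1) → Finset (Fin n) := fun i =>
  {⟨i.val, Nat.lt_of_lt_of_le i.isLt (Nat.sub_le n 1)⟩,
   ⟨i.val + 1, by have := i.isLt; omega⟩}

section PMap

variable {β : Type*} [LinearOrder β] [Fintype β]

/-- The equivalence class of `i` as a finset. -/
noncomputable def classFinset (α : Setoid β) (i : β) : Finset β :=
  letI := Classical.decPred (α.r i)
  Finset.univ.filter (α.r i)

lemma mem_classFinset {α : Setoid β} {i j : β} : j ∈ classFinset α i ↔ α.r i j := by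
  classical
  simp [classFinset]

lemma self_mem_classFinset (α : Setoid β) (i : β) : i ∈ classFinset α i :=
  mem_classFinset.mpr (α.refl i)

lemma classFinset_eq_of_rel {α : Setoid β} {i j : β} (h : α.r i j) :
    classFinset α i = classFinset α j := by
  ext x
  simp only [mem_classFinset]
  exact ⟨fun hx => α.trans (α.symm h) hx, fun hx => α.trans h hx⟩

/-- The map `P` from partitions to permutations: each class, listed increasingly,
becomes a cycle. -/
noncomputable def partitionToPerm (α : Setoid β) : Equiv.Perm β :=
  Equiv.ofBijective (fun i => ((classFinset α i).sort (· ≤ ·)).formPerm i) (by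
    rw [← Finite.injective_iff_bijective]
    intro a b hab
    dsimp only at hab
    have ha : ((classFinset α a).sort (· ≤ ·)).formPerm a ∈ (classFinset α a).sort (· ≤ ·) :=
      List.formPerm_apply_mem_of_mem ((Finset.mem_sort _).mpr (self_mem_classFinset α a))
    have hb : ((classFinset α b).sort (· ≤ ·)).formPerm b ∈ (classFinset α b).sort (· ≤ ·) :=
      List.formPerm_apply_mem_of_mem ((Finset.mem_sort _).mpr (self_mem_classFinset α b))
    have ha' : α.r a (((classFinset α a).sort (· ≤ ·)).formPerm a) :=
      mem_classFinset.mp ((Finset.mem_sort _).mp ha)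
    have hb' : α.r b (((classFinset α b).sort (· ≤ ·)).formPerm b) :=
      mem_classFinset.mp ((Finset.mem_sort _).mp hb)
    have hrel : α.r a b := by
      refine α.iseqv.trans ha' ?_
      rw [hab]
      exact α.iseqv.symm hb'
    have hcc : classFinset α a = classFinset α b := classFinset_eq_of_rel hrel
    rw [hcc] at hab
    exact ((classFinset α b).sort (· ≤ ·)).formPerm.injective hab)

end PMap

instance setoidFinite {X : Type*} [Finite X] : Finite (Setoid X) :=
  Finite.of_injective (fun s : Setoid X => s.r) fun a b h => by
    cases a; cases b; dsimp at h; subst h; rfl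

section Mobius

/-- The Möbius function of a finite poset, determined by `μ(x,x) = 1` and
`∑_{x ≤ z ≤ y} μ(z,y) = 0` for `x < y`. -/
noncomputable def mobius {P : Type*} [PartialOrder P] [Fintype P] (a b : P) : ℤ :=
  letI := Classical.dec
  if a = b then 1
  else if a ≤ b then
    - ∑ z ∈ (Finset.univ.filter (fun z => a < z ∧ z ≤ b)).attach,
        mobius (z : P) b
  else 0
termination_by letI := Classical.dec; (Finset.univ.filter (fun z : P => a < z ∧ z ≤ b)).card
decreasing_by
  classical
  have hz := z.2
  simp only [Finset.mem_filter, Finset.mem_univ, true_and] at hz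
  apply Finset.card_lt_card
  rw [Finset.ssubset_iff_of_subset]
  · exact ⟨z, by simp [hz.1, hz.2], by simp⟩
  · intro w hw
    simp only [Finset.mem_filter, Finset.mem_univ, true_and] at hw ⊢
    exact ⟨lt_trans hz.1 hw.1, hw.2⟩

end Mobius

section Restrict

variable {n m k : ℕ}

lemma restrictSetoid_isNoncrossing {K : Fin m → Finset (Fin n)}
    (hK : ∀ i, (K i).Nonempty) {ι : Fin k → Fin m} {α : Setoid (Fin k)}
    (hα : α ∈ NCSet K ι) (v : Fin m) :
    IsNoncrossing (restrictSetoid α (fun j => ι j = v)) := by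
  rintro ⟨i, hi⟩ ⟨p, hp⟩ ⟨j, hj⟩ ⟨q, hq⟩ hip hpj hjq hij hpq hnip
  have h1 : i < p := hip
  have h2 : p < j := hpj
  have h3 : j < q := hjq
  have hij' : α.r i j := hij
  have hpq' : α.r p q := hpq
  have hnip' : ¬ α.r i p := hnip
  have := hα.2 i p j q h1 h2 h3 hij' hpq' hnip'
  rw [hi, hp] at this
  unfold eps at this
  rw [Finset.inter_self] at this
  rcases hK v with ⟨x, hx⟩
  simp only [(Finset.nonempty_iff_ne_empty.mp ⟨x, hx⟩), if_false] at this
  exact absurd this (by simp [Finset.nonempty_iff_ne_empty.mp ⟨x, hx⟩])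

end Restrict

end LRH

namespace LRH

/-- The product of the two full cycles `(1 … p)(p+1 … p+q)`. -/
def gammaPQ (p q : ℕ) : Equiv.Perm (Fin (p + q)) :=
  fullCycleOn (Finset.univ.filter fun i : Fin (p + q) => (i : ℕ) < p) *
    fullCycleOn (Finset.univ.filter fun i : Fin (p + q) => p ≤ (i : ℕ))

end LRH


/-!
For permutations σ, τ of an `n`-element set whose generated group has `k` orbits,
`#σ + #τ + #(στ) ≤ n + 2k`, and `#σ + #τ + #(στ) ≡ n (mod 2)` because
`sign σ = (-1)^(n - #σ)`.
Cycles are counted as classes of the same-cycle relation, and right multiplication by a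
transposition `(a b)` merges the classes of `a` and `b` or splits their common class. The
inequality follows by induction on `n - #τ`: writing `τ = τ' (a b)` with `a, b` in one cycle of
`τ` gives `#τ' = #τ + 1`, and `#(στ)` drops below `#(στ')` exactly when `a` and `b` lie in
different orbits of `⟨σ, τ'⟩`, which then merge into one orbit of `⟨σ, τ⟩`.
For `σ = P_α`, a fixed-point-free involution with `#σ = n/2`, `τ = γ_{p,q}` with `#τ = 2`, and
`k = 1` this gives `#(P_α γ_{p,q}) ≤ n/2` and `#(P_α γ_{p,q}) ≡ n/2 (mod 2)`.
-/

namespace Setoid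

variable {X : Type*}

def merge (r : Setoid X) (a b : X) : Setoid X where
  r x y := r x y ∨ (r x a ∧ r b y) ∨ (r x b ∧ r a y)
  iseqv := by
    refine ⟨fun x => Or.inl (r.refl x), ?_, ?_⟩
    · rintro x y (h | ⟨h₁, h₂⟩ | ⟨h₁, h₂⟩)
      · exact Or.inl (r.symm h)
      · exact Or.inr (Or.inr ⟨r.symm h₂, r.symm h₁⟩)
      · exact Or.inr (Or.inl ⟨r.symm h₂, r.symm h₁⟩)
    · rintro x y z (h | ⟨h₁, h₂⟩ | ⟨h₁, h₂⟩) (h' | ⟨h₁', h₂'⟩ | ⟨h₁', h₂'⟩)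
      · exact Or.inl (r.trans h h')
      · exact Or.inr (Or.inl ⟨r.trans h h₁', h₂'⟩)
      · exact Or.inr (Or.inr ⟨r.trans h h₁', h₂'⟩)
      · exact Or.inr (Or.inl ⟨h₁, r.trans h₂ h'⟩)
      · exact Or.inr (Or.inl ⟨h₁, h₂'⟩)
      · exact Or.inl (r.trans h₁ h₂')
      · exact Or.inr (Or.inr ⟨h₁, r.trans h₂ h'⟩)
      · exact Or.inl (r.trans h₁ h₂')
      · exact Or.inr (Or.inr ⟨h₁, h₂'⟩)

theorem le_merge (r : Setoid X) (a b : X) : r ≤ r.merge a b := fun _ _ h => Or.inl h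

theorem merge_mono {r s : Setoid X} (h : r ≤ s) (a b : X) : r.merge a b ≤ s.merge a b := by
  rintro x y (hxy | ⟨h₁, h₂⟩ | ⟨h₁, h₂⟩)
  exacts [Or.inl (h hxy), Or.inr (Or.inl ⟨h h₁, h h₂⟩), Or.inr (Or.inr ⟨h h₁, h h₂⟩)]

theorem merge_le {r s : Setoid X} {a b : X} (h : r ≤ s) (hab : s a b) : r.merge a b ≤ s := by
  rintro x y (hxy | ⟨h₁, h₂⟩ | ⟨h₁, h₂⟩)
  · exact h hxy
  · exact s.trans (h h₁) (s.trans hab (h h₂))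
  · exact s.trans (h h₁) (s.trans (s.symm hab) (h h₂))

theorem card_quotient_le_of_le [Finite X] {r s : Setoid X} (h : r ≤ s) :
    Nat.card (Quotient s) ≤ Nat.card (Quotient r) :=
  Nat.card_le_card_of_surjective (map_of_le h) (Quotient.ind fun x => ⟨Quotient.mk r x, rfl⟩)

theorem card_quotient_le_card_quotient_merge_add_one [Finite X] (r : Setoid X) (a b : X) :
    Nat.card (Quotient r) ≤ Nat.card (Quotient (r.merge a b)) + 1 := by
  classical
  rw [← Finite.card_option]
  refine Nat.card_le_card_of_injective
    (fun q => if q = Quotient.mk r b then none else some (map_of_le (r.le_merge a b) q)) ?_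
  refine Quotient.ind₂ fun x y hxy => ?_
  have hb : ∀ {z}, Quotient.mk r z = Quotient.mk r b ↔ r z b := Quotient.eq
  by_cases hx : r x b <;> by_cases hy : r y b <;>
    simp only [hb, hx, hy, if_true, if_false, reduceCtorEq, Option.some.injEq] at hxy
  · exact Quotient.sound (r.trans hx (r.symm hy))
  · rcases Quotient.exact hxy with h | ⟨-, h⟩ | ⟨h, -⟩
    exacts [Quotient.sound h, absurd (r.symm h) hy, absurd h hx]

end Setoid

namespace Equiv.Perm

variable {α : Type*}

theorem SameCycle.setoid_le_of_forall_rel {g : Perm α} {r : Setoid α} (h : ∀ x, r x (g x)) :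
    SameCycle.setoid g ≤ r := by
  rintro x _ ⟨k, rfl⟩
  induction k using Int.induction_on with
  | zero => exact r.refl x
  | succ k ih => rw [add_comm, zpow_one_add, mul_apply]; exact r.trans ih (h _)
  | pred k ih =>
    rw [sub_eq_neg_add, zpow_add, zpow_neg_one, mul_apply]
    refine r.trans ih (r.symm ?_)
    simpa only [coe_inv, Equiv.apply_symm_apply] using h (g⁻¹ _)

theorem SameCycle.setoid_mul_le_sup (σ τ : Perm α) :
    SameCycle.setoid (σ * τ) ≤ SameCycle.setoid σ ⊔ SameCycle.setoid τ := by
  set R := SameCycle.setoid σ ⊔ SameCycle.setoid τ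
  exact SameCycle.setoid_le_of_forall_rel fun x => R.trans
    ((le_sup_right : _ ≤ R) (sameCycle_apply_right.2 SameCycle.rfl : τ.SameCycle x (τ x)))
    ((le_sup_left : _ ≤ R) (sameCycle_apply_right.2 SameCycle.rfl : σ.SameCycle (τ x) _))

theorem SameCycle.setoid_mul_swap_le_merge [DecidableEq α] (g : Perm α) (a b : α) :
    SameCycle.setoid (g * swap a b) ≤ (SameCycle.setoid g).merge a b := by
  refine SameCycle.setoid_le_of_forall_rel fun x => ?_
  rw [mul_apply, swap_apply_def]
  split_ifs with ha hb
  · exact Or.inr (Or.inl ⟨ha ▸ SameCycle.rfl, sameCycle_apply_right.2 SameCycle.rfl⟩)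
  · exact Or.inr (Or.inr ⟨hb ▸ SameCycle.rfl, sameCycle_apply_right.2 SameCycle.rfl⟩)
  · exact Or.inl (sameCycle_apply_right.2 SameCycle.rfl)

/-- Along the `g`-cycle of `b`, which avoids `a`, the permutation `g * swap a b` agrees with `g`
from `g b = (g * swap a b) a` until it reaches `b`. -/
theorem sameCycle_mul_swap_of_not_sameCycle [DecidableEq α] [Finite α] {g : Perm α} {a b : α}
    (h : ¬ g.SameCycle a b) : (g * swap a b).SameCycle a b := by
  by_contra hC
  have hiter : ∀ k : ℕ, (g * swap a b).SameCycle a ((g ^ k) (g b)) := by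
    intro k
    induction k with
    | zero => exact ⟨1, by simp⟩
    | succ k ih =>
      have hza : (g ^ k) (g b) ≠ a := fun hz =>
        h (hz ▸ sameCycle_pow_right.2 (sameCycle_apply_right.2 SameCycle.rfl)).symm
      have hzb : (g ^ k) (g b) ≠ b := fun hz => hC (by rwa [hz] at ih)
      have hstep : g ((g ^ k) (g b)) = (g * swap a b) ((g ^ k) (g b)) := by
        rw [mul_apply, swap_apply_of_ne_of_ne hza hzb]
      rw [pow_succ', mul_apply, hstep]
      exact sameCycle_apply_right.2 ih
  obtain ⟨k, -, hk⟩ := (sameCycle_apply_left.2 (SameCycle.refl g b)).exists_pow_eq'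
  exact hC (by simpa only [hk] using hiter k)

theorem sup_sameCycle_setoid_apply_of_mem_closure {σ τ π : Perm α}
    (hπ : π ∈ Subgroup.closure {σ, τ}) (x : α) :
    (SameCycle.setoid σ ⊔ SameCycle.setoid τ) x (π x) := by
  set R := SameCycle.setoid σ ⊔ SameCycle.setoid τ
  induction hπ using Subgroup.closure_induction generalizing x with
  | mem g hg =>
    rw [Set.mem_insert_iff, Set.mem_singleton_iff] at hg
    rcases hg with rfl | rfl
    exacts [(le_sup_left : _ ≤ R) (sameCycle_apply_right.2 SameCycle.rfl),
      (le_sup_right : _ ≤ R) (sameCycle_apply_right.2 SameCycle.rfl)]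
  | one => exact R.refl x
  | mul f g _ _ hf hg => exact R.trans (hg x) (hf (g x))
  | inv g _ hg => exact R.symm (by simpa using hg (g⁻¹ x))

theorem SameCycle.mul_of_commute {f g : Perm α} (hfg : Commute f g) {x y : α} (hx : g x = x)
    (h : f.SameCycle x y) : (f * g).SameCycle x y := by
  obtain ⟨k, rfl⟩ := h
  exact ⟨k, by rw [hfg.mul_zpow, mul_apply, zpow_apply_eq_self_of_apply_eq_self hx]⟩

end Equiv.Perm

namespace LRH

open Equiv.Perm

section Cycles

variable {β : Type*} [LinearOrder β] [Fintype β]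

theorem numCycles_eq_card_quotient (g : Perm β) :
    numCycles g = Nat.card (Quotient (SameCycle.setoid g)) := by
  let φ : Quotient (SameCycle.setoid g) → g.cycleFactorsFinset ⊕ {x // x ∉ g.support} :=
    Quotient.lift (fun x => if hx : x ∈ g.support
        then Sum.inl ⟨g.cycleOf x, cycleOf_mem_cycleFactorsFinset_iff.2 hx⟩
        else Sum.inr ⟨x, hx⟩) fun x y (hxy : g.SameCycle x y) => by
      by_cases hx : x ∈ g.support
      · simp [hx, hxy.mem_support_iff.1 hx, hxy.cycleOf_eq]
      · obtain rfl := hxy.eq_of_left (notMem_support.1 hx)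
        rfl
  have hinj : Function.Injective φ := by
    refine Quotient.ind₂ fun x y hxy => Quotient.sound ?_
    by_cases hx : x ∈ g.support <;> by_cases hy : y ∈ g.support <;> simp [φ, hx, hy] at hxy
    · exact (sameCycle_iff_cycleOf_eq_of_mem_support hx hy).2 hxy
    · exact hxy ▸ SameCycle.rfl
  have hsurj : Function.Surjective φ := by
    rintro (⟨c, hc⟩ | ⟨x, hx⟩)
    · obtain ⟨x, hxc⟩ := (mem_cycleFactorsFinset_iff.1 hc).1.nonempty_support
      have hx : x ∈ g.support := mem_cycleFactorsFinset_support_le hc hxc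
      exact ⟨Quotient.mk _ x, by simp [φ, hx, cycle_is_cycleOf hxc hc]⟩
    · exact ⟨Quotient.mk _ x, by simp [φ, hx]⟩
  rw [Nat.card_eq_of_bijective φ ⟨hinj, hsurj⟩, Nat.card_sum, numCycles, cycleType_def,
    Multiset.card_map, Nat.card_eq_fintype_card, Nat.card_eq_fintype_card,
    Fintype.card_subtype_compl, Fintype.card_coe, Fintype.card_coe]
  rfl

theorem numCycles_le_card (g : Perm β) : numCycles g ≤ Fintype.card β := by
  rw [numCycles_eq_card_quotient, ← Nat.card_eq_fintype_card]
  exact Nat.card_le_card_of_surjective _ Quotient.mk_surjective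

theorem numCycles_one : numCycles (1 : Perm β) = Fintype.card β := by
  simp [numCycles]

theorem sign_eq_neg_one_pow_card_add_numCycles (g : Perm β) :
    sign g = (-1) ^ (Fintype.card β + numCycles g) := by
  rw [sign_of_cycleType]
  refine neg_one_pow_congr ?_
  have := g.sum_cycleType
  have := Finset.card_le_univ g.support
  simp only [Nat.even_iff, numCycles]
  omega

theorem even_card_add_numCycles_add_numCycles_add_numCycles_mul (σ τ : Perm β) :
    Even (Fintype.card β + numCycles σ + numCycles τ + numCycles (σ * τ)) := by
  have h : sign σ * sign τ * sign (σ * τ) = 1 := by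
    rw [Perm.sign_mul, Int.units_mul_self]
  simp only [sign_eq_neg_one_pow_card_add_numCycles, ← pow_add] at h
  have := (neg_one_pow_eq_one_iff_even (by decide)).1 h
  simp only [Nat.even_iff] at this ⊢
  omega

theorem odd_numCycles_mul_swap_add_numCycles (g : Perm β) {a b : β} (hab : a ≠ b) :
    Odd (numCycles (g * swap a b) + numCycles g) := by
  have h : sign (g * swap a b) * sign g = -1 := by
    rw [Perm.sign_mul, sign_swap hab, mul_comm, ← mul_assoc, Int.units_mul_self, one_mul]
  simp only [sign_eq_neg_one_pow_card_add_numCycles, ← pow_add] at h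
  have := (neg_one_pow_eq_neg_one_iff_odd (by decide)).1 h
  simp only [Nat.odd_iff] at this ⊢
  omega

theorem numCycles_mul_swap_le (g : Perm β) (a b : β) :
    numCycles (g * swap a b) ≤ numCycles g + 1 := by
  have h := SameCycle.setoid_mul_swap_le_merge (g * swap a b) a b
  rw [mul_assoc, swap_mul_self, mul_one] at h
  rw [numCycles_eq_card_quotient, numCycles_eq_card_quotient]
  exact ((SameCycle.setoid _).card_quotient_le_card_quotient_merge_add_one a b).trans
    (Nat.add_le_add_right (Setoid.card_quotient_le_of_le h) 1)

theorem numCycles_mul_swap_of_sameCycle {g : Perm β} {a b : β} (hab : a ≠ b)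
    (h : g.SameCycle a b) : numCycles (g * swap a b) = numCycles g + 1 := by
  have hge : numCycles g ≤ numCycles (g * swap a b) := by
    rw [numCycles_eq_card_quotient, numCycles_eq_card_quotient]
    exact Setoid.card_quotient_le_of_le
      ((SameCycle.setoid_mul_swap_le_merge g a b).trans (Setoid.merge_le le_rfl h))
  obtain ⟨k, hk⟩ := odd_numCycles_mul_swap_add_numCycles g hab
  have := numCycles_mul_swap_le g a b
  omega

theorem numCycles_mul_swap_of_not_sameCycle {g : Perm β} {a b : β} (h : ¬ g.SameCycle a b) :
    numCycles (g * swap a b) + 1 = numCycles g := by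
  have hab : a ≠ b := by rintro rfl; exact h SameCycle.rfl
  simpa [mul_assoc] using
    (numCycles_mul_swap_of_sameCycle hab (sameCycle_mul_swap_of_not_sameCycle h)).symm

theorem two_mul_numCycles_of_involutive {g : Perm β} (hg : Function.Involutive g)
    (hfree : ∀ x, g x ≠ x) : 2 * numCycles g = Fintype.card β := by
  have hsq : g ^ 2 = 1 := Equiv.ext fun x => by simp [sq, hg x]
  have hsupp : g.support = Finset.univ :=
    Finset.eq_univ_of_forall fun x => mem_support.2 (hfree x)
  have hsum := g.sum_cycleType
  rw [cycleType_of_pow_prime_eq_one hsq, Multiset.sum_replicate, smul_eq_mul, hsupp,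
    Finset.card_univ] at hsum
  rw [numCycles, hsupp, Finset.card_univ]
  omega

theorem numCycles_add_numCycles_add_numCycles_mul_le (σ τ : Perm β) :
    numCycles σ + numCycles τ + numCycles (σ * τ) ≤
      Fintype.card β + 2 * Nat.card (Quotient (SameCycle.setoid σ ⊔ SameCycle.setoid τ)) := by
  induction hk : Fintype.card β - numCycles τ using Nat.strong_induction_on generalizing τ with
  | _ k ih =>
  by_cases hτ : τ = 1
  · subst hτ
    have hbot : SameCycle.setoid (1 : Perm β) = ⊥ := Setoid.ext fun _ _ => sameCycle_one
    rw [hbot, sup_bot_eq, ← numCycles_eq_card_quotient, mul_one, numCycles_one]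
    omega
  obtain ⟨a, ha⟩ : ∃ a, τ a ≠ a := not_forall.1 fun h => hτ (Equiv.ext h)
  set b := τ a
  set τ' := τ * swap a b
  have hτ' : numCycles τ' = numCycles τ + 1 :=
    numCycles_mul_swap_of_sameCycle ha.symm (sameCycle_apply_right.2 SameCycle.rfl)
  have hτ_eq : τ = τ' * swap a b := by simp [τ', mul_assoc]
  have IH := ih _ (by have := numCycles_le_card τ'; omega) τ' rfl
  have hcyc : SameCycle.setoid τ ≤ (SameCycle.setoid τ').merge a b :=
    hτ_eq ▸ SameCycle.setoid_mul_swap_le_merge τ' a b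
  have hστ : σ * τ = σ * τ' * swap a b := by rw [mul_assoc, ← hτ_eq]
  set R' := SameCycle.setoid σ ⊔ SameCycle.setoid τ'
  by_cases hR' : R' a b
  · have hR : SameCycle.setoid σ ⊔ SameCycle.setoid τ ≤ R' :=
      sup_le le_sup_left (hcyc.trans (Setoid.merge_le le_sup_right hR'))
    have := Setoid.card_quotient_le_of_le hR
    have := numCycles_mul_swap_le (σ * τ') a b
    rw [← hστ] at this
    omega
  · have hR : SameCycle.setoid σ ⊔ SameCycle.setoid τ ≤ R'.merge a b :=
      sup_le (le_sup_left.trans (R'.le_merge a b))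
        (hcyc.trans (Setoid.merge_mono le_sup_right a b))
    have := Setoid.card_quotient_le_of_le hR
    have := R'.card_quotient_le_card_quotient_merge_add_one a b
    have := numCycles_mul_swap_of_not_sameCycle fun h =>
      hR' (SameCycle.setoid_mul_le_sup σ τ' h)
    rw [← hστ] at this
    omega

end Cycles

section PairPartitions

variable {β : Type*} [LinearOrder β] [Fintype β]

theorem partitionToPerm_rel (α : Setoid β) (i : β) : α.r i (partitionToPerm α i) :=
  mem_classFinset.1 ((Finset.mem_sort _).1
    (List.formPerm_apply_mem_of_mem ((Finset.mem_sort _).2 (self_mem_classFinset α i))))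

theorem exists_partitionToPerm_eq_swap {α : Setoid β} (hpair : IsPairPartition α) (i : β) :
    ∃ u v, u ≠ v ∧ (i = u ∨ i = v) ∧ ∀ j, α.r i j → partitionToPerm α j = swap u v j := by
  have hcard : (classFinset α i).card = 2 := by
    rw [← hpair i, ← Set.ncard_coe_finset]
    congr
    ext
    simp [mem_classFinset]
  have hlen : ((classFinset α i).sort (· ≤ ·)).length = 2 := by rw [Finset.length_sort, hcard]
  obtain ⟨u, v, huv⟩ := List.length_eq_two.1 hlen
  have hnodup := huv ▸ Finset.sort_nodup (classFinset α i) (· ≤ ·)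
  have hi : i ∈ [u, v] := huv ▸ (Finset.mem_sort _).2 (self_mem_classFinset α i)
  refine ⟨u, v, by simpa using hnodup, by simpa using hi, fun j hj => ?_⟩
  change ((classFinset α j).sort (· ≤ ·)).formPerm j = _
  rw [← classFinset_eq_of_rel hj, huv, List.formPerm_pair]

theorem partitionToPerm_involutive {α : Setoid β} (hpair : IsPairPartition α) :
    Function.Involutive (partitionToPerm α) := fun i => by
  obtain ⟨u, v, -, -, h⟩ := exists_partitionToPerm_eq_swap hpair i
  rw [h _ (partitionToPerm_rel α i), h i (α.refl i), swap_apply_self]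

theorem partitionToPerm_apply_ne {α : Setoid β} (hpair : IsPairPartition α) (i : β) :
    partitionToPerm α i ≠ i := by
  obtain ⟨u, v, huv, hi, h⟩ := exists_partitionToPerm_eq_swap hpair i
  rw [h i (α.refl i)]
  exact swap_apply_ne_self_iff.2 ⟨huv, hi⟩

end PairPartitions

section FullCycles

variable {β : Type*} [LinearOrder β] [Fintype β]

theorem fullCycleOn_apply_of_notMem {J : Finset β} {x : β} (hx : x ∉ J) :
    fullCycleOn J x = x :=
  List.formPerm_apply_of_notMem (by simpa using hx)

theorem fullCycleOn_apply_mem_iff {J : Finset β} {x : β} : fullCycleOn J x ∈ J ↔ x ∈ J := by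
  have h := List.formPerm_mem_iff_mem (l := J.sort (· ≤ ·)) (x := x)
  rwa [Finset.mem_sort, Finset.mem_sort] at h

theorem sameCycle_fullCycleOn {J : Finset β} {x y : β} (hx : x ∈ J) (hy : y ∈ J) :
    (fullCycleOn J).SameCycle x y := by
  rcases eq_or_ne x y with rfl | hxy
  · exact SameCycle.rfl
  have hl := Finset.sort_nodup J (· ≤ ·)
  have h2 : 2 ≤ (J.sort (· ≤ ·)).length := by
    rw [Finset.length_sort]
    exact Finset.one_lt_card.2 ⟨x, hx, y, hy, hxy⟩
  have hmoved : ∀ {z}, z ∈ J → fullCycleOn J z ≠ z := fun hz =>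
    (List.formPerm_apply_mem_ne_self_iff _ hl _ (by simpa using hz)).2 h2
  exact (List.isCycle_formPerm hl h2).sameCycle (hmoved hx) (hmoved hy)

theorem sameCycle_gammaPQ_iff {p q : ℕ} {x y : Fin (p + q)} :
    (gammaPQ p q).SameCycle x y ↔ ((x : ℕ) < p ↔ (y : ℕ) < p) := by
  set A := Finset.univ.filter fun i : Fin (p + q) => (i : ℕ) < p
  set B := Finset.univ.filter fun i : Fin (p + q) => p ≤ (i : ℕ)
  have hA : ∀ {z}, z ∈ A ↔ (z : ℕ) < p := by simp [A]
  have hB : ∀ {z}, z ∈ B ↔ ¬ (z : ℕ) < p := by simp [B]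
  have hcomm : Commute (fullCycleOn A) (fullCycleOn B) := Perm.Disjoint.commute fun z => by
    by_cases hz : (z : ℕ) < p
    · exact Or.inr (fullCycleOn_apply_of_notMem (hB.not.2 (not_not.2 hz)))
    · exact Or.inl (fullCycleOn_apply_of_notMem (hA.not.2 hz))
  constructor
  · intro h
    have hstep : ∀ z, (Setoid.ker fun i : Fin (p + q) => (i : ℕ) < p) z (gammaPQ p q z) := by
      intro z
      rw [Setoid.ker_def, gammaPQ, mul_apply]
      by_cases hz : (z : ℕ) < p
      · rw [fullCycleOn_apply_of_notMem (hB.not.2 (not_not.2 hz))]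
        simpa [hz] using hA.1 (fullCycleOn_apply_mem_iff.2 (hA.2 hz))
      · have hB' := hB.1 (fullCycleOn_apply_mem_iff.2 (hB.2 hz))
        rw [fullCycleOn_apply_of_notMem (hA.not.2 hB')]
        simpa [hz] using hB'
    exact eq_iff_iff.1 (Setoid.ker_def.1 (SameCycle.setoid_le_of_forall_rel hstep h))
  · intro hxy
    by_cases hx : (x : ℕ) < p
    · exact (sameCycle_fullCycleOn (hA.2 hx) (hA.2 (hxy.1 hx))).mul_of_commute hcomm
        (fullCycleOn_apply_of_notMem (hB.not.2 (not_not.2 hx)))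
    · rw [gammaPQ, hcomm.eq]
      exact (sameCycle_fullCycleOn (hB.2 hx) (hB.2 (hxy.not.1 hx))).mul_of_commute hcomm.symm
        (fullCycleOn_apply_of_notMem (hA.not.2 hx))

theorem numCycles_gammaPQ {p q : ℕ} (hp : 1 ≤ p) (hq : 1 ≤ q) : numCycles (gammaPQ p q) = 2 := by
  have h : SameCycle.setoid (gammaPQ p q) =
      Setoid.ker fun i : Fin (p + q) => decide ((i : ℕ) < p) :=
    Setoid.ext fun x y => sameCycle_gammaPQ_iff.trans (by simp [Setoid.ker_def])
  have hsurj : Function.Surjective fun i : Fin (p + q) => decide ((i : ℕ) < p) := by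
    rintro (_ | _)
    exacts [⟨⟨p, by omega⟩, by simp⟩, ⟨⟨0, by omega⟩, by simp; omega⟩]
  rw [numCycles_eq_card_quotient, h,
    Nat.card_congr (Setoid.quotientKerEquivOfSurjective _ hsurj), Nat.card_eq_fintype_card,
    Fintype.card_bool]

end FullCycles

end LRH

open LRH in
theorem statement5_general (p q : ℕ) (hp : 1 ≤ p) (hq : 1 ≤ q)
    (α : Setoid (Fin (p + q))) (hpair : IsPairPartition α)
    (hconn : ∀ x y : Fin (p + q),
      ∃ π ∈ Subgroup.closure {partitionToPerm α, gammaPQ p q}, π x = y) :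
    (∃ g : ℕ, numCycles (partitionToPerm α * gammaPQ p q) + 2 * g = (p + q) / 2) ∧
    numCycles (partitionToPerm α * gammaPQ p q) ≤ (p + q) / 2 := by
  set P := partitionToPerm α
  set γ := gammaPQ p q
  have hP : 2 * numCycles P = p + q := by
    simpa using two_mul_numCycles_of_involutive (partitionToPerm_involutive hpair)
      (partitionToPerm_apply_ne hpair)
  have hγ : numCycles γ = 2 := numCycles_gammaPQ hp hq
  have horbit :
      Nat.card (Quotient (Perm.SameCycle.setoid P ⊔ Perm.SameCycle.setoid γ)) ≤ 1 := by
    refine Finite.card_le_one_iff_subsingleton.2 ⟨Quotient.ind₂ fun x y => Quotient.sound ?_⟩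
    obtain ⟨π, hπ, rfl⟩ := hconn x y
    exact Perm.sup_sameCycle_setoid_apply_of_mem_closure hπ x
  have hbound := numCycles_add_numCycles_add_numCycles_mul_le P γ
  obtain ⟨k, hk⟩ := even_card_add_numCycles_add_numCycles_add_numCycles_mul P γ
  rw [Fintype.card_fin] at hbound hk
  exact ⟨⟨((p + q) / 2 - numCycles (P * γ)) / 2, by omega⟩, by omega⟩

open LRH in
/-- For a connected pair partition α of `{1,…,p+q}` (relative to
`γ_{p,q}`), the number of cycles of `P_α·γ_{p,q}` equals `(p+q)/2 − 2g` for some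
integer `g ≥ 0`; in particular it is at most `(p+q)/2`. -/
theorem statement5 (p q : ℕ) (hp : 1 ≤ p) (hq : 1 ≤ q) (hpq : Even (p + q))
    (α : Setoid (Fin (p + q))) (hpair : IsPairPartition α)
    (hconn : ∀ x y : Fin (p + q),
      ∃ π ∈ Subgroup.closure {partitionToPerm α, gammaPQ p q}, π x = y) :
    (∃ g : ℕ, numCycles (partitionToPerm α * gammaPQ p q) + 2 * g = (p + q) / 2) ∧
    numCycles (partitionToPerm α * gammaPQ p q) ≤ (p + q) / 2 :=
  statement5_general p q hp hq α hpair hconn
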